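/- Let μ be a Borel measure on ℂ that is finite on compact sets, and let c ∈ ℂ. Then there exists a constant C ≥ 0, depending only on μ and c, such that for all r ≥ 2: N(μ,c,r) ≤ (1 + |c|/r + (1+|c|)·log(1+|c|)/log(r+|c|)) · N(μ,0,r+|c|) + C. -/

import Mathlib

open MeasureTheory Filter Metric

/-- `log⁺ x = max(0, log x)` -/
noncomputable def logPlus (x : ℝ) : ℝ := max 0 (Real.log x)

/-- Nevanlinna proximity function `m(r, f)`. -/
noncomputable def nevProx (f : ℂ → ℂ) (r : ℝ) : ℝ :=
  (2 * Real.pi)⁻¹ * ∫ θ in (0:ℝ)..(2 * Real.pi), logPlus ‖f (r * Complex.exp (θ * Complex.I))‖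

open scoped Classical in
/-- Multiplicity of `z` as a pole of `f`. -/
noncomputable def poleMult (f : ℂ → ℂ) (z : ℂ) : ℕ :=
  if h : MeromorphicAt f z then (-((meromorphicOrderAt f z).untopD 0)).toNat else 0

/-- Unintegrated counting function `n(t, f)`: number of poles in the closed disc of
radius `t`, counted with multiplicity. -/
noncomputable def poleCnt (f : ℂ → ℂ) (t : ℝ) : ℝ :=
  ∑' z : ℂ, (closedBall (0:ℂ) t).indicator (fun u => (poleMult f u : ℝ)) z

/-- Integrated counting function `N(r, f)` of poles. -/
noncomputable def nevCount (f : ℂ → ℂ) (r : ℝ) : ℝ :=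
  (∫ t in (0:ℝ)..r, (poleCnt f t - poleCnt f 0) / t) + poleCnt f 0 * Real.log r

/-- Nevanlinna characteristic `T(r, f) = m(r, f) + N(r, f)`. -/
noncomputable def nevChar (f : ℂ → ℂ) (r : ℝ) : ℝ := nevProx f r + nevCount f r

/-- `f` is a rational function. -/
def IsRationalFn (f : ℂ → ℂ) : Prop :=
  ∃ p q : Polynomial ℂ, q ≠ 0 ∧ ∀ z : ℂ, q.eval z ≠ 0 → f z = p.eval z / q.eval z

/-- `E ⊆ [1, ∞)` has zero lower density. -/
def ZeroLowerDensity (E : Set ℝ) : Prop :=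
  Filter.liminf (fun r => (volume (E ∩ Set.Icc 1 r)).toReal / r) Filter.atTop = 0

/-- `E ⊆ [1, ∞)` has zero upper density. -/
def ZeroUpperDensity (E : Set ℝ) : Prop :=
  Filter.limsup (fun r => (volume (E ∩ Set.Icc 1 r)).toReal / r) Filter.atTop = 0

/-- `E` has finite logarithmic measure: `∫_E dt/t < ∞`. -/
def FiniteLogMeasure (E : Set ℝ) : Prop :=
  ∫⁻ t in E, ENNReal.ofReal t⁻¹ < ⊤

/-- `n(mu, c, t) = mu(closedBall c t)` for a Borel measure on the plane. -/
noncomputable def ballCnt (mu : MeasureTheory.Measure ℂ) (c : ℂ) (t : ℝ) : ℝ :=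
  (mu (closedBall c t)).toReal

/-- `N(mu, c, r) = ∫₁^r n(mu,c,t)/t dt`. -/
noncomputable def intCnt (mu : MeasureTheory.Measure ℂ) (c : ℂ) (r : ℝ) : ℝ :=
  ∫ t in (1:ℝ)..r, ballCnt mu c t / t


/-!
With `a = ‖c‖` and `n = n(μ,0,·)`, the disc of radius `t` about `c` lies in the disc of radius
`t + a` about `0`, so `N(μ,c,r) ≤ ∫₁^r n(t+a)/t dt`. Split
`1/t = (1 + a/r)/(t+a) + ((r-t)/r)(1/t - 1/(t+a))`: the first term contributes at most
`(1 + a/r) N(r+a)`. The kernel `1/t - 1/(t+a)` has mass `≤ log(1+a)` on `[1, τ]` and `≤ a/τ` on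
`[τ, r]`, while the weight `n(t+a)(r-t)/r` is at most `n(τ+a) ≤ N(r+a)/log((r+a)/(τ+a))` on
`[1, τ]` and at most `(r+a) N(r+a)/r` on `[τ, r]`, both by `n(s) log(R/s) ≤ N(R)`. Cutting at `τ + a = (r+a)^(a/(a+2))` makes the two pieces at most
`(a+2)/2` and `a/2` times `log(1+a) N(r+a)/log(r+a)` once `r` is large; smaller `r` go into `C`.
-/

open Real Set intervalIntegral
open scoped Interval

/-- `intCnt μ c` is definitionally `integratedCount (ballCnt μ c)`. -/
noncomputable def integratedCount (f : ℝ → ℝ) (r : ℝ) : ℝ := ∫ t in (1:ℝ)..r, f t / t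

section IntegratedCount

variable {f g : ℝ → ℝ} {a : ℝ}

lemma ne_zero_of_mem_uIcc_of_pos {x y t : ℝ} (hx : 0 < x) (hy : 0 < y) (ht : t ∈ [[x, y]]) :
    t ≠ 0 :=
  (lt_of_lt_of_le (lt_min hx hy) ht.1).ne'

lemma Monotone.intervalIntegrable_div_self (hf : Monotone f) {x y : ℝ} (hx : 0 < x)
    (hy : 0 < y) : IntervalIntegrable (fun t => f t / t) volume x y := by
  simpa only [div_eq_mul_inv] using hf.intervalIntegrable.mul_continuousOn
    (continuousOn_inv₀.mono fun _ ht => ne_zero_of_mem_uIcc_of_pos hx hy ht)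

lemma Monotone.intervalIntegrable_comp_add_div (hf : Monotone f) {x y : ℝ} (hx : 0 < x)
    (hy : 0 < y) : IntervalIntegrable (fun t => f (t + a) / t) volume x y :=
  (hf.comp (monotone_id.add_const a)).intervalIntegrable_div_self hx hy

lemma Monotone.intervalIntegrable_comp_add_div_add (hf : Monotone f) {x y : ℝ} (hx : 0 < x + a)
    (hy : 0 < y + a) : IntervalIntegrable (fun t => f (t + a) / (t + a)) volume x y := by
  simpa using (hf.intervalIntegrable_div_self hx hy).comp_add_right a

lemma intervalIntegrable_inv_of_pos {x y : ℝ} (hx : 0 < x) (hy : 0 < y) :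
    IntervalIntegrable (fun t : ℝ => t⁻¹) volume x y :=
  intervalIntegrable_inv (fun _ ht => ne_zero_of_mem_uIcc_of_pos hx hy ht) continuousOn_id

lemma intervalIntegrable_inv_add {x y : ℝ} (hx : 0 < x + a) (hy : 0 < y + a) :
    IntervalIntegrable (fun t => (t + a)⁻¹) volume x y := by
  simpa using (intervalIntegrable_inv_of_pos hx hy).comp_add_right a

lemma integratedCount_nonneg (hf0 : 0 ≤ f) {r : ℝ} (hr : 1 ≤ r) : 0 ≤ integratedCount f r :=
  integral_nonneg hr fun t ht => div_nonneg (hf0 t) (by linarith [ht.1])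

lemma integral_div_le_integratedCount (hf : Monotone f) (hf0 : 0 ≤ f) {x y R : ℝ}
    (hx : 1 ≤ x) (hxy : x ≤ y) (hyR : y ≤ R) :
    ∫ u in x..y, f u / u ≤ integratedCount f R := by
  refine integral_mono_interval hx hxy hyR ?_
    (hf.intervalIntegrable_div_self one_pos (by linarith))
  filter_upwards [ae_restrict_mem measurableSet_Ioc] with u hu
  exact div_nonneg (hf0 u) (by linarith [hu.1])

lemma mul_log_div_le_integratedCount (hf : Monotone f) (hf0 : 0 ≤ f) {s R : ℝ} (hs : 1 ≤ s)
    (hsR : s ≤ R) : f s * log (R / s) ≤ integratedCount f R := by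
  have hs0 : 0 < s := by linarith
  have hR0 : 0 < R := hs0.trans_le hsR
  calc f s * log (R / s) = ∫ u in s..R, f s / u := by
        simp only [div_eq_mul_inv, intervalIntegral.integral_const_mul,
          integral_inv_of_pos hs0 hR0]
    _ ≤ ∫ u in s..R, f u / u :=
        integral_mono_on hsR (monotone_const.intervalIntegrable_div_self hs0 hR0)
          (hf.intervalIntegrable_div_self hs0 hR0)
          fun u hu => div_le_div_of_nonneg_right (hf hu.1) (hs0.trans_le hu.1).le
    _ ≤ integratedCount f R := integral_div_le_integratedCount hf hf0 hs hsR le_rfl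

lemma mul_sub_le_integratedCount (hf : Monotone f) (hf0 : 0 ≤ f) {s R : ℝ} (hs : 1 ≤ s)
    (hsR : s ≤ R) : f s * (R - s) ≤ R * integratedCount f R := by
  have hR : 0 < R := by linarith
  have hsub : R - s ≤ R * log (R / s) := by
    have := one_sub_inv_le_log_of_pos (div_pos hR (by linarith : (0:ℝ) < s))
    rw [inv_div] at this
    calc R - s = R * (1 - s / R) := by field_simp
      _ ≤ R * log (R / s) := mul_le_mul_of_nonneg_left this hR.le
  calc f s * (R - s) ≤ f s * (R * log (R / s)) := mul_le_mul_of_nonneg_left hsub (hf0 s)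
    _ = R * (f s * log (R / s)) := by ring
    _ ≤ R * integratedCount f R :=
        mul_le_mul_of_nonneg_left (mul_log_div_le_integratedCount hf hf0 hs hsR) hR.le

lemma integral_inv_sub_inv_add {x y : ℝ} (ha : 0 ≤ a) (hx : 0 < x) (hy : 0 < y) :
    ∫ t in x..y, (t⁻¹ - (t + a)⁻¹) = log (y / x) - log ((y + a) / (x + a)) := by
  have hxa : 0 < x + a := by linarith
  have hya : 0 < y + a := by linarith
  rw [integral_sub (intervalIntegrable_inv_of_pos hx hy)
      (intervalIntegrable_inv_add hxa hya), integral_comp_add_right (fun t => t⁻¹),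
    integral_inv_of_pos hx hy, integral_inv_of_pos hxa hya]

lemma integral_inv_sub_inv_add_le_log {τ : ℝ} (ha : 0 ≤ a) (hτ : 1 ≤ τ) :
    ∫ t in (1:ℝ)..τ, (t⁻¹ - (t + a)⁻¹) ≤ log (1 + a) := by
  rw [integral_inv_sub_inv_add ha one_pos (by linarith), div_one,
    log_div (by linarith) (by linarith)]
  linarith [log_le_log (by linarith) (by linarith : τ ≤ τ + a)]

lemma integral_inv_sub_inv_add_le_div {τ r : ℝ} (ha : 0 ≤ a) (hτ : 0 < τ) (hτr : τ ≤ r) :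
    ∫ t in τ..r, (t⁻¹ - (t + a)⁻¹) ≤ a / τ := by
  have hr : 0 < r := hτ.trans_le hτr
  rw [integral_inv_sub_inv_add ha hτ hr, log_div hr.ne' hτ.ne',
    log_div (by linarith) (by linarith)]
  have h₁ : log r ≤ log (r + a) := log_le_log hr (by linarith)
  have h₂ : log (τ + a) - log τ ≤ a / τ := by
    rw [← log_div (by linarith) hτ.ne']
    calc log ((τ + a) / τ) ≤ (τ + a) / τ - 1 := log_le_sub_one_of_pos (by positivity)
      _ = a / τ := by field_simp; ring
  linarith

lemma integral_comp_add_div_le_of_le {x y r M : ℝ} (hf : Monotone f) (ha : 0 ≤ a) (hr : r ≠ 0)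
    (hx : 0 < x) (hxy : x ≤ y) (hM : ∀ t ∈ Icc x y, f (t + a) * (r - t) / r ≤ M) :
    ∫ t in x..y, f (t + a) / t ≤
      (1 + a / r) * (∫ t in x..y, f (t + a) / (t + a)) +
        M * ∫ t in x..y, (t⁻¹ - (t + a)⁻¹) := by
  have hy : 0 < y := hx.trans_le hxy
  have hK : IntervalIntegrable (fun t => t⁻¹ - (t + a)⁻¹) volume x y :=
    (intervalIntegrable_inv_of_pos hx hy).sub
      (intervalIntegrable_inv_add (by linarith) (by linarith))
  have hfa : IntervalIntegrable (fun t => f (t + a) / (t + a)) volume x y :=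
    hf.intervalIntegrable_comp_add_div_add (by linarith) (by linarith)
  rw [← intervalIntegral.integral_const_mul, ← intervalIntegral.integral_const_mul,
    ← integral_add (hfa.const_mul _) (hK.const_mul _)]
  refine integral_mono_on hxy (hf.intervalIntegrable_comp_add_div hx hy)
    ((hfa.const_mul _).add (hK.const_mul _)) fun t ht => ?_
  have ht0 : 0 < t := hx.trans_le ht.1
  have hK0 : 0 ≤ t⁻¹ - (t + a)⁻¹ := sub_nonneg.2 (inv_anti₀ ht0 (by linarith))
  calc f (t + a) / t
      = (1 + a / r) * (f (t + a) / (t + a)) +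
          f (t + a) * (r - t) / r * (t⁻¹ - (t + a)⁻¹) := by
        field_simp
        ring
    _ ≤ (1 + a / r) * (f (t + a) / (t + a)) + M * (t⁻¹ - (t + a)⁻¹) := by
        gcongr
        exact hM t ht

lemma integral_comp_add_div_le {τ r : ℝ} (hf : Monotone f) (hf0 : 0 ≤ f) (ha : 0 ≤ a)
    (hτ : 1 ≤ τ) (hτr : τ ≤ r) :
    ∫ t in (1:ℝ)..r, f (t + a) / t ≤
      (1 + a / r) * integratedCount f (r + a) + f (τ + a) * log (1 + a) +
        (r + a) / r * integratedCount f (r + a) * (a / τ) := by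
  set N := integratedCount f (r + a)
  have hr : 0 < r := by linarith
  have hN : 0 ≤ N := integratedCount_nonneg hf0 (by linarith)
  have hhead := integral_comp_add_div_le_of_le (M := f (τ + a)) hf ha hr.ne' one_pos hτ
    fun t ht => calc
      f (t + a) * (r - t) / r ≤ f (t + a) * 1 := by
        rw [mul_div_assoc]
        exact mul_le_mul_of_nonneg_left ((div_le_one hr).2 (by linarith [ht.1])) (hf0 _)
      _ ≤ f (τ + a) := by simpa using hf (by linarith [ht.2])
  have htail := integral_comp_add_div_le_of_le (M := (r + a) / r * N) hf ha hr.ne' (by linarith)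
    hτr fun t ht => by
      have h := mul_sub_le_integratedCount hf hf0 (s := t + a) (R := r + a)
        (by linarith [ht.1]) (by linarith [ht.2])
      rw [add_sub_add_right_eq_sub] at h
      calc f (t + a) * (r - t) / r ≤ (r + a) * N / r := by gcongr
        _ = (r + a) / r * N := by ring
  have hmain : ∫ t in (1:ℝ)..r, f (t + a) / (t + a) ≤ N := by
    rw [integral_comp_add_right (fun u => f u / u)]
    exact integral_div_le_integratedCount hf hf0 (by linarith) (by linarith) le_rfl
  have hsplit : (∫ t in (1:ℝ)..τ, f (t + a) / t) + ∫ t in τ..r, f (t + a) / t =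
      ∫ t in (1:ℝ)..r, f (t + a) / t :=
    integral_add_adjacent_intervals (hf.intervalIntegrable_comp_add_div one_pos (by linarith))
      (hf.intervalIntegrable_comp_add_div (by linarith) hr)
  have hsplit' : (∫ t in (1:ℝ)..τ, f (t + a) / (t + a)) + ∫ t in τ..r, f (t + a) / (t + a) =
      ∫ t in (1:ℝ)..r, f (t + a) / (t + a) :=
    integral_add_adjacent_intervals (hf.intervalIntegrable_comp_add_div_add (by linarith)
      (by linarith)) (hf.intervalIntegrable_comp_add_div_add (by linarith) (by linarith))
  have hK₁ := mul_le_mul_of_nonneg_left (integral_inv_sub_inv_add_le_log ha hτ)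
    (hf0 (τ + a))
  have hK₂ := mul_le_mul_of_nonneg_left (integral_inv_sub_inv_add_le_div ha (by linarith) hτr)
    (by positivity : 0 ≤ (r + a) / r * N)
  have hshift := mul_le_mul_of_nonneg_left hmain (by positivity : 0 ≤ 1 + a / r)
  linear_combination hhead + htail + hK₁ + hK₂ + hshift + (1 + a / r) * hsplit' - hsplit

lemma integratedCount_le_integral_comp_add (hg : Monotone g) (hf : Monotone f)
    (hgf : ∀ t, g t ≤ f (t + a)) {r : ℝ} (hr : 1 ≤ r) :
    integratedCount g r ≤ ∫ t in (1:ℝ)..r, f (t + a) / t :=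
  integral_mono_on hr (hg.intervalIntegrable_div_self one_pos (by linarith))
    (hf.intervalIntegrable_comp_add_div one_pos (by linarith))
    fun t ht => div_le_div_of_nonneg_right (hgf t) (by linarith [ht.1])

lemma integratedCount_le_of_rpow_cutoff {r : ℝ} (hf : Monotone f) (hf0 : 0 ≤ f) (hg : Monotone g)
    (hgf : ∀ t, g t ≤ f (t + a)) (ha : 0 < a) (hr : 1 ≤ r) (har : a ≤ r)
    (h₁ : 1 + a ≤ (r + a) ^ (a / (a + 2)))
    (h₂ : log (r + a) ≤ log (1 + a) / 4 * ((r + a) ^ (a / (a + 2)) - a)) :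
    integratedCount g r ≤
      (1 + a / r + (1 + a) * log (1 + a) / log (r + a)) * integratedCount f (r + a) := by
  set R := r + a
  set S := R ^ (a / (a + 2))
  set N := integratedCount f R
  set L := log (1 + a)
  have hR : 1 < R := by linarith
  have hlR : 0 < log R := log_pos hR
  have hL : 0 < L := log_pos (by linarith)
  have hN : 0 ≤ N := integratedCount_nonneg hf0 hR.le
  have hSR : S ≤ R :=
    calc S ≤ R ^ (1:ℝ) :=
          rpow_le_rpow_of_exponent_le hR.le ((div_le_one (by linarith)).2 (by linarith))
      _ = R := rpow_one R
  have hlogS : log (R / S) = 2 / (a + 2) * log R := by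
    rw [log_div (by linarith) (by linarith), log_rpow (by linarith)]
    field_simp
    ring
  have hhead : f S * (2 / (a + 2) * log R) ≤ N := by
    rw [← hlogS]
    exact mul_log_div_le_integratedCount hf hf0 (by linarith) hSR
  have hhead' : f S * L ≤ N * ((a + 2) * L / (2 * log R)) :=
    calc f S * L = f S * (2 / (a + 2) * log R) * ((a + 2) * L / (2 * log R)) := by
          field_simp
      _ ≤ N * ((a + 2) * L / (2 * log R)) := by gcongr
  have htail : R / r * N * (a / (S - a)) ≤ N * (a * L / (2 * log R)) := by
    rw [mul_comm _ N, mul_assoc]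
    gcongr
    rw [div_mul_div_comm, div_le_div_iff₀ (by nlinarith) (by positivity)]
    nlinarith [mul_le_mul_of_nonneg_left h₂ (by positivity : 0 ≤ 4 * r * a),
      mul_le_mul_of_nonneg_right (by linarith : R ≤ 2 * r) (by positivity : 0 ≤ 2 * a * log R)]
  have hsplit := integral_comp_add_div_le hf hf0 ha.le (τ := S - a) (r := r) (by linarith)
    (by linarith)
  rw [sub_add_cancel] at hsplit
  calc integratedCount g r ≤ ∫ t in (1:ℝ)..r, f (t + a) / t :=
        integratedCount_le_integral_comp_add hg hf hgf hr
    _ ≤ (1 + a / r) * N + N * ((a + 2) * L / (2 * log R)) + N * (a * L / (2 * log R)) := by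
        linarith
    _ = (1 + a / r + (1 + a) * L / log R) * N := by
        field_simp
        ring

end IntegratedCount

lemma eventually_log_le_mul_rpow_sub {β ε : ℝ} (hβ : 0 < β) (hε : 0 < ε) (b : ℝ) :
    ∀ᶠ x in atTop, log x ≤ ε * (x ^ β - b) := by
  filter_upwards [(isLittleO_log_rpow_atTop hβ).bound (half_pos hε),
    (tendsto_rpow_atTop hβ).eventually_ge_atTop (2 * b), eventually_ge_atTop 1]
    with x hlog hx hx1
  rw [norm_of_nonneg (log_nonneg hx1), norm_of_nonneg (rpow_nonneg (by linarith) _)] at hlog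
  nlinarith

theorem exists_integratedCount_le_of_le_comp_add {f g : ℝ → ℝ} {a : ℝ} (hf : Monotone f)
    (hf0 : 0 ≤ f) (hg : Monotone g) (hg0 : 0 ≤ g) (hgf : ∀ t, g t ≤ f (t + a))
    (ha : 0 ≤ a) :
    ∃ C : ℝ, 0 ≤ C ∧ ∀ r : ℝ, 2 ≤ r →
      integratedCount g r ≤
        (1 + a / r + (1 + a) * log (1 + a) / log (r + a)) * integratedCount f (r + a) + C := by
  rcases ha.eq_or_lt with rfl | ha
  · refine ⟨0, le_rfl, fun r hr => ?_⟩
    simpa [integratedCount] using integratedCount_le_integral_comp_add hg hf hgf (by linarith)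
  have hβ : 0 < a / (a + 2) := by positivity
  have hL : 0 < log (1 + a) := log_pos (by linarith)
  have hlarge : ∀ᶠ r in atTop, a ≤ r ∧ 1 + a ≤ (r + a) ^ (a / (a + 2)) ∧
      log (r + a) ≤ log (1 + a) / 4 * ((r + a) ^ (a / (a + 2)) - a) :=
    (eventually_ge_atTop a).and <| (tendsto_atTop_add_const_right atTop a tendsto_id).eventually <|
      ((tendsto_rpow_atTop hβ).eventually_ge_atTop (1 + a)).and
        (eventually_log_le_mul_rpow_sub hβ (by positivity) a)
  obtain ⟨r₀, hr₀⟩ := eventually_atTop.1 hlarge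
  set r₁ := max r₀ 2
  refine ⟨integratedCount g r₁, integratedCount_nonneg hg0 (by linarith [le_max_right r₀ 2]),
    fun r hr => ?_⟩
  rcases le_or_gt r r₁ with hle | hlt
  · have hcoeff : 0 ≤ 1 + a / r + (1 + a) * log (1 + a) / log (r + a) :=
      add_nonneg (by positivity) (div_nonneg (by positivity) (log_nonneg (by linarith)))
    have hN := mul_nonneg hcoeff (integratedCount_nonneg hf0 (by linarith : 1 ≤ r + a))
    have hmono : integratedCount g r ≤ integratedCount g r₁ :=
      integral_div_le_integratedCount hg hg0 le_rfl (by linarith) hle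
    linarith
  · obtain ⟨har, h₁, h₂⟩ := hr₀ r ((le_max_left r₀ 2).trans hlt.le)
    have := integratedCount_le_of_rpow_cutoff hf hf0 hg hgf ha (by linarith) har h₁ h₂
    linarith [integratedCount_nonneg hg0 (by linarith [le_max_right r₀ 2] : 1 ≤ r₁)]

section BallCount

variable (μ : Measure ℂ) (c : ℂ)

lemma ballCnt_nonneg : 0 ≤ ballCnt μ c := fun _ => ENNReal.toReal_nonneg

variable [IsFiniteMeasureOnCompacts μ]

lemma ballCnt_mono : Monotone (ballCnt μ c) := fun _ t hst =>
  ENNReal.toReal_mono (isCompact_closedBall c t).measure_lt_top.ne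
    (measure_mono (closedBall_subset_closedBall hst))

lemma ballCnt_le_ballCnt_zero (t : ℝ) : ballCnt μ c t ≤ ballCnt μ 0 (t + ‖c‖) :=
  ENNReal.toReal_mono (isCompact_closedBall 0 _).measure_lt_top.ne
    (measure_mono (closedBall_subset_closedBall' (by rw [dist_zero_right])))

end BallCount

theorem shifted_counting_function_upper_bound
    (μ : MeasureTheory.Measure ℂ) [MeasureTheory.IsFiniteMeasureOnCompacts μ] (c : ℂ) :
    ∃ C : ℝ, 0 ≤ C ∧ ∀ r : ℝ, 2 ≤ r →
      intCnt μ c r ≤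
        (1 + ‖c‖ / r +
            (1 + ‖c‖) * Real.log (1 + ‖c‖) / Real.log (r + ‖c‖)) *
          intCnt μ 0 (r + ‖c‖) + C :=
  exists_integratedCount_le_of_le_comp_add (ballCnt_mono μ 0) (ballCnt_nonneg μ 0)
    (ballCnt_mono μ c) (ballCnt_nonneg μ c) (ballCnt_le_ballCnt_zero μ c) (norm_nonneg c)
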